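/- arXiv:2504.19217 — 4 statements merged into one kernel-verified Lean document; each statement's English description precedes it below -/
import Mathlib

section
/- For a nonempty open set Ω ⊆ ℝ^m of finite Lebesgue measure, the heat content H_Ω(t) is a decreasing function of t on (0, ∞). -/
open MeasureTheory Real Set Filter

noncomputable def heatKernel (m : ℕ) (t : ℝ) (x y : EuclideanSpace ℝ (Fin m)) : ℝ :=
  (4 * π * t) ^ (-(m : ℝ) / 2) * Real.exp (-‖x - y‖ ^ 2 / (4 * t))

noncomputable def heatContent (m : ℕ) (Ω : Set (EuclideanSpace ℝ (Fin m))) (t : ℝ) : ℝ :=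
  ∫ x in Ω, ∫ y in Ω, heatKernel m t x y

/-!
The heat kernel is a Fourier integral of a Gaussian:
`p_t(v) = (2π)^{-m} ∫ e^{i⟪v, ξ⟫} e^{-t‖ξ‖²} dξ`. Hence for every finite measure `μ`, by Fubini,
`∬ p_t(x - y) dμ(x) dμ(y) = (2π)^{-m} ∫ |μ̂(ξ)|² e^{-t‖ξ‖²} dξ`, where `μ̂` is the characteristic
function of `μ`: the double integral is an integral against `μ ∗ (-μ)`, whose characteristic
function is `μ̂ · conj μ̂ = |μ̂|²`. The right-hand side is visibly decreasing in `t`; the heat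
content is the case `μ = volume.restrict Ω`, finite because `|Ω| < ∞`.
-/

open Complex Module RealInnerProductSpace

noncomputable def gaussianKernel (V : Type*) [NormedAddCommGroup V] [InnerProductSpace ℝ V]
    (t : ℝ) (v : V) : ℝ :=
  (4 * π * t) ^ (-(finrank ℝ V : ℝ) / 2) * rexp (-‖v‖ ^ 2 / (4 * t))

section Kernel

variable {V : Type*} [NormedAddCommGroup V] [InnerProductSpace ℝ V]

lemma continuous_gaussianKernel (t : ℝ) : Continuous (gaussianKernel V t) := by
  unfold gaussianKernel; fun_prop

lemma gaussianKernel_nonneg {t : ℝ} (ht : 0 ≤ t) (v : V) : 0 ≤ gaussianKernel V t v := by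
  unfold gaussianKernel; positivity

lemma gaussianKernel_le {t : ℝ} (ht : 0 ≤ t) (v : V) :
    gaussianKernel V t v ≤ (4 * π * t) ^ (-(finrank ℝ V : ℝ) / 2) := by
  unfold gaussianKernel
  refine mul_le_of_le_one_right (by positivity) (exp_le_one_iff.2 ?_)
  rw [neg_div]; exact neg_nonpos.2 (by positivity)

variable [FiniteDimensional ℝ V] [MeasurableSpace V] [BorelSpace V]

lemma integrable_cexp_neg_mul_sq_norm {b : ℝ} (hb : 0 < b) :
    Integrable (fun ξ : V ↦ cexp (-b * ‖ξ‖ ^ 2)) := by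
  simpa using GaussianFourier.integrable_cexp_neg_mul_sq_norm_add (V := V)
    (b := b) (by simpa using hb) 0 0

lemma integrable_rexp_neg_mul_sq_norm {b : ℝ} (hb : 0 < b) :
    Integrable (fun ξ : V ↦ rexp (-b * ‖ξ‖ ^ 2)) := by
  convert (integrable_cexp_neg_mul_sq_norm (V := V) hb).norm using 2 with ξ
  rw [← ofReal_pow, ← ofReal_neg, ← ofReal_mul, norm_exp_ofReal]

lemma ofReal_gaussianKernel_eq_integral {t : ℝ} (ht : 0 < t) (v : V) :
    (gaussianKernel V t v : ℂ) =
      ((2 * π) ^ (-(finrank ℝ V : ℝ)) : ℝ) * ∫ ξ : V, cexp (⟪v, ξ⟫ * I) * cexp (-t * ‖ξ‖ ^ 2) := by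
  have hfourier := GaussianFourier.integral_cexp_neg_mul_sq_norm_add (V := V)
    (b := t) (by simpa using ht) I v
  have hexp : ∀ ξ : V, cexp (⟪v, ξ⟫ * I) * cexp (-t * ‖ξ‖ ^ 2) =
      cexp (-t * ‖ξ‖ ^ 2 + I * ⟪v, ξ⟫) := fun ξ ↦ by rw [← Complex.exp_add]; ring_nf
  have hconst : (4 * π * t) ^ (-(finrank ℝ V : ℝ) / 2) =
      (2 * π) ^ (-(finrank ℝ V : ℝ)) * (π / t) ^ ((finrank ℝ V : ℝ) / 2) := by
    have h1 : (2 * π) ^ (-(finrank ℝ V : ℝ)) = (4 * π ^ 2) ^ (-(finrank ℝ V : ℝ) / 2) := by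
      rw [show (4 * π ^ 2) = (2 * π) ^ (2 : ℝ) by norm_num [mul_pow], ← rpow_mul (by positivity)]
      ring_nf
    have h2 : (π / t) ^ ((finrank ℝ V : ℝ) / 2) = (t / π) ^ (-(finrank ℝ V : ℝ) / 2) := by
      rw [neg_div, rpow_neg (by positivity), ← inv_rpow (by positivity), inv_div]
    rw [h1, h2, ← mul_rpow (by positivity) (by positivity)]
    congr 1
    field_simp
  have hpow : ((π : ℂ) / t) ^ ((finrank ℝ V : ℂ) / 2) =
      ((π / t) ^ ((finrank ℝ V : ℝ) / 2) : ℝ) := by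
    rw [ofReal_cpow (by positivity)]; push_cast; rfl
  have hgauss : cexp (I ^ 2 * ‖v‖ ^ 2 / (4 * t)) = (rexp (-‖v‖ ^ 2 / (4 * t)) : ℂ) := by
    rw [I_sq]; push_cast; ring_nf
  simp_rw [hexp, hfourier, hpow, hgauss, gaussianKernel, hconst]
  push_cast
  ring

lemma integral_integral_cexp_mul_eq_integral_charFun_mul (ν : Measure V) [IsFiniteMeasure ν]
    {G : V → ℂ} (hG : Integrable G) :
    ∫ v, (∫ ξ, cexp (⟪v, ξ⟫ * I) * G ξ) ∂ν = ∫ ξ, charFun ν ξ * G ξ := by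
  have hcont : Continuous fun p : V × V ↦ cexp (⟪p.1, p.2⟫ * I) := by fun_prop
  have hint : Integrable (Function.uncurry fun v ξ ↦ cexp (⟪v, ξ⟫ * I) * G ξ) (ν.prod volume) :=
    (hG.comp_snd ν).bdd_mul (c := 1) hcont.aestronglyMeasurable
      (ae_of_all _ fun p ↦ (norm_exp_ofReal_mul_I _).le)
  rw [integral_integral_swap hint]
  simp_rw [charFun_apply, integral_mul_const]

lemma charFun_conv_map_neg_self (μ : Measure V) [IsFiniteMeasure μ] (ξ : V) :
    charFun (μ ∗ μ.map Neg.neg) ξ = ‖charFun μ ξ‖ ^ 2 := by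
  have hneg : charFun (μ.map Neg.neg) ξ = charFun μ (-ξ) := by
    rw [charFun_apply, charFun_apply, integral_map (by fun_prop) (by fun_prop)]
    simp_rw [inner_neg_left, inner_neg_right]
  rw [charFun_conv, hneg, charFun_neg, mul_conj']

lemma integral_integral_sub_eq_integral_conv (μ : Measure V) [IsFiniteMeasure μ] {f : V → ℝ}
    (hf : Integrable f (μ ∗ μ.map Neg.neg)) :
    ∫ x, ∫ y, f (x - y) ∂μ ∂μ = ∫ v, f v ∂(μ ∗ μ.map Neg.neg) := by
  rw [integral_conv hf]
  refine integral_congr_ae (ae_of_all _ fun x ↦ ?_)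
  simp only [sub_eq_add_neg]
  exact (integral_map_equiv (MeasurableEquiv.neg V) fun y ↦ f (x + y)).symm

lemma integral_integral_gaussianKernel_sub (μ : Measure V) [IsFiniteMeasure μ] {t : ℝ}
    (ht : 0 < t) :
    ∫ x, ∫ y, gaussianKernel V t (x - y) ∂μ ∂μ =
      (2 * π) ^ (-(finrank ℝ V : ℝ)) * ∫ ξ, ‖charFun μ ξ‖ ^ 2 * rexp (-t * ‖ξ‖ ^ 2) := by
  have hK : Integrable (gaussianKernel V t) (μ ∗ μ.map Neg.neg) :=
    (integrable_const _).mono' (continuous_gaussianKernel t).aestronglyMeasurable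
      (ae_of_all _ fun v ↦ by
        rw [norm_of_nonneg (gaussianKernel_nonneg ht.le v)]; exact gaussianKernel_le ht.le v)
  rw [integral_integral_sub_eq_integral_conv μ hK]
  apply ofReal_injective
  rw [← integral_complex_ofReal]
  simp_rw [ofReal_gaussianKernel_eq_integral ht]
  rw [integral_const_mul,
    integral_integral_cexp_mul_eq_integral_charFun_mul _ (integrable_cexp_neg_mul_sq_norm ht),
    ofReal_mul, ← integral_complex_ofReal]
  congr 1
  refine integral_congr_ae (ae_of_all _ fun ξ ↦ ?_)
  dsimp only
  rw [charFun_conv_map_neg_self]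
  push_cast
  ring

lemma antitoneOn_integral_integral_gaussianKernel_sub (μ : Measure V) [IsFiniteMeasure μ] :
    AntitoneOn (fun t ↦ ∫ x, ∫ y, gaussianKernel V t (x - y) ∂μ ∂μ) (Ioi 0) := by
  have hint : ∀ τ : ℝ, 0 < τ → Integrable fun ξ ↦ ‖charFun μ ξ‖ ^ 2 * rexp (-τ * ‖ξ‖ ^ 2) :=
    fun τ hτ ↦ (integrable_rexp_neg_mul_sq_norm hτ).bdd_mul (c := μ.real univ ^ 2)
      (by fun_prop) (ae_of_all _ fun ξ ↦ by
        rw [norm_pow, norm_norm]; exact pow_le_pow_left₀ (norm_nonneg _) (norm_charFun_le ξ) 2)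
  intro s hs t ht hst
  simp only [integral_integral_gaussianKernel_sub μ hs, integral_integral_gaussianKernel_sub μ ht]
  refine mul_le_mul_of_nonneg_left (integral_mono (hint t ht) (hint s hs) fun ξ ↦ ?_)
    (by positivity)
  dsimp only
  gcongr

end Kernel

lemma heatKernel_eq_gaussianKernel (m : ℕ) (t : ℝ) (x y : EuclideanSpace ℝ (Fin m)) :
    heatKernel m t x y = gaussianKernel _ t (x - y) := by
  simp [heatKernel, gaussianKernel]

theorem stmt_3_general (m : ℕ) (Ω : Set (EuclideanSpace ℝ (Fin m))) (hvol : volume Ω < ⊤) :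
    AntitoneOn (heatContent m Ω) (Set.Ioi 0) := by
  have : IsFiniteMeasure (volume.restrict Ω) := isFiniteMeasure_restrict.2 hvol.ne
  have h := antitoneOn_integral_integral_gaussianKernel_sub (volume.restrict Ω)
  simp_rw [← heatKernel_eq_gaussianKernel] at h
  exact h

theorem stmt_3 (m : ℕ) (hm : 1 ≤ m) (Ω : Set (EuclideanSpace ℝ (Fin m)))
    (hne : Ω.Nonempty) (hopen : IsOpen Ω) (hvol : volume Ω < ⊤) :
    AntitoneOn (heatContent m Ω) (Set.Ioi 0) :=
  stmt_3_general m Ω hvol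
end

section
/- For a nonempty open set Ω ⊆ ℝ^m of finite Lebesgue measure, the heat content H_Ω(t) is a convex function of t on (0, ∞). -/
open MeasureTheory Real Set Filter

/-!
Fourier inversion of a Gaussian writes the heat kernel as
`p_t(x, y) = (2π)^{-m} ∫ e^{i⟪x - y, ξ⟫} e^{-t‖ξ‖²} dξ`. Integrating over `Ω × Ω` and exchanging
the integrals gives `H_Ω(t) = (2π)^{-m} ∫ ‖φ(ξ)‖² e^{-t‖ξ‖²} dξ`, where `φ` is the characteristic
function of Lebesgue measure restricted to `Ω`. This is a nonnegative superposition of the convex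
functions `t ↦ e^{-t‖ξ‖²}`, hence convex.
-/

open Complex (I)
open scoped RealInnerProductSpace ComplexConjugate Complex

theorem convexOn_integral {E α : Type*} [AddCommGroup E] [Module ℝ E] [MeasurableSpace α]
    {ν : Measure α} {s : Set E} {f : E → α → ℝ} (hs : Convex ℝ s)
    (hf : ∀ a, ConvexOn ℝ s (f · a)) (hint : ∀ x ∈ s, Integrable (f x) ν) :
    ConvexOn ℝ s fun x => ∫ a, f x a ∂ν := by
  refine ⟨hs, fun x hx y hy a b ha hb hab => ?_⟩
  calc ∫ z, f (a • x + b • y) z ∂ν ≤ ∫ z, a • f x z + b • f y z ∂ν :=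
        integral_mono (hint _ (hs hx hy ha hb hab))
          (((hint x hx).const_mul a).add ((hint y hy).const_mul b))
          fun z => (hf z).2 hx hy ha hb hab
    _ = a • ∫ z, f x z ∂ν + b • ∫ z, f y z ∂ν := by
        simp only [smul_eq_mul]
        rw [integral_add ((hint x hx).const_mul a) ((hint y hy).const_mul b), integral_const_mul,
          integral_const_mul]

lemma convexOn_exp_neg_mul (q : ℝ) : ConvexOn ℝ univ fun t : ℝ => rexp (-(t * q)) := by
  refine (convexOn_exp.comp_linearMap ((-q) • LinearMap.id)).congr fun t _ => ?_
  simp [mul_comm]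

theorem integral_integral_swap_of_norm_le {α β E : Type*} [MeasurableSpace α] [MeasurableSpace β]
    [NormedAddCommGroup E] [NormedSpace ℝ E] {μ : Measure α} {ν : Measure β} [IsFiniteMeasure μ]
    [SFinite ν] {f : α → β → E} {g : β → ℝ}
    (hf : AEStronglyMeasurable (Function.uncurry f) (μ.prod ν)) (hg : Integrable g ν)
    (hfg : ∀ x y, ‖f x y‖ ≤ g y) :
    ∫ x, ∫ y, f x y ∂ν ∂μ = ∫ y, ∫ x, f x y ∂μ ∂ν :=
  integral_integral_swap <| ((integrable_const (1 : ℝ)).mul_prod hg).mono' hf <|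
    .of_forall fun ⟨x, y⟩ => by simpa using hfg x y

section CharFun

variable {E : Type*} [NormedAddCommGroup E] [InnerProductSpace ℝ E]

lemma cexp_inner_sub_mul_I (x y ξ : E) :
    cexp (⟪x - y, ξ⟫ * I) = cexp (⟪x, ξ⟫ * I) * conj (cexp (⟪y, ξ⟫ * I)) := by
  rw [← Complex.exp_conj, ← Complex.exp_add, map_mul, Complex.conj_ofReal, Complex.conj_I,
    inner_sub_left]
  push_cast
  ring_nf

variable [MeasurableSpace E] [BorelSpace E] [SecondCountableTopology E]
  (μ : Measure E) [IsFiniteMeasure μ] {ν : Measure E} [SFinite ν]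

theorem integral_integral_integral_cexp_inner_mul_conj {g : E → ℝ} (hg : Integrable g ν) :
    ∫ x, ∫ y, ∫ ξ, cexp (⟪x, ξ⟫ * I) * conj (cexp (⟪y, ξ⟫ * I)) * g ξ ∂ν ∂μ ∂μ =
      ∫ ξ, ((‖charFun μ ξ‖ ^ 2 * g ξ : ℝ) : ℂ) ∂ν := by
  have hgm : AEStronglyMeasurable (fun p : E × E => (g p.2 : ℂ)) (μ.prod ν) :=
    Complex.continuous_ofReal.comp_aestronglyMeasurable hg.1.comp_snd
  have norm_e : ∀ x ξ : E, ‖cexp (⟪x, ξ⟫ * I)‖ = 1 := fun x ξ => Complex.norm_exp_ofReal_mul_I _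
  have inner : ∀ x, ∫ y, (∫ ξ, cexp (⟪x, ξ⟫ * I) * conj (cexp (⟪y, ξ⟫ * I)) * g ξ ∂ν) ∂μ =
      ∫ ξ, cexp (⟪x, ξ⟫ * I) * g ξ * conj (charFun μ ξ) ∂ν := by
    intro x
    refine (integral_integral_swap_of_norm_le
      (f := fun y ξ => cexp (⟪x, ξ⟫ * I) * conj (cexp (⟪y, ξ⟫ * I)) * g ξ) (by fun_prop) hg.norm
      fun y ξ => by simp [norm_e]).trans ?_
    congr 1 with ξ
    rw [charFun_apply, ← integral_conj, ← integral_const_mul]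
    congr 1 with y
    ring
  rw [integral_congr_ae (.of_forall inner)]
  refine (integral_integral_swap_of_norm_le
    (f := fun x ξ => cexp (⟪x, ξ⟫ * I) * g ξ * conj (charFun μ ξ))
    (g := fun ξ => μ.real univ * ‖g ξ‖) (by fun_prop) (hg.norm.const_mul _)
    fun x ξ => by
      rw [norm_mul, norm_mul, norm_e, Complex.norm_real, Complex.norm_conj, one_mul, mul_comm]
      exact mul_le_mul_of_nonneg_right (norm_charFun_le ξ) (norm_nonneg _)).trans ?_
  congr 1 with ξ
  rw [integral_mul_const, integral_mul_const, ← charFun_apply, mul_right_comm, Complex.mul_conj,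
    Complex.normSq_eq_norm_sq]
  push_cast
  ring

end CharFun

section Gaussian

variable {V : Type*} [NormedAddCommGroup V] [InnerProductSpace ℝ V] [FiniteDimensional ℝ V]
  [MeasurableSpace V] [BorelSpace V]

lemma integrable_exp_neg_mul_sq_norm {b : ℝ} (hb : 0 < b) :
    Integrable fun v : V => rexp (-(b * ‖v‖ ^ 2)) := by
  refine (GaussianFourier.integrable_cexp_neg_mul_sq_norm_add (V := V) (b := b) (by simpa) 0 0
    |>.norm.congr (.of_forall fun v => ?_))
  simp [Complex.norm_exp, ← Complex.ofReal_pow]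

lemma integral_cexp_inner_mul_exp_neg_mul_sq_norm {t : ℝ} (ht : 0 < t) (w : V) :
    ∫ v, cexp (⟪w, v⟫ * I) * rexp (-(t * ‖v‖ ^ 2)) =
      ((π / t) ^ (Module.finrank ℝ V / 2 : ℝ) * rexp (-(‖w‖ ^ 2 / (4 * t))) : ℝ) := by
  have h := GaussianFourier.integral_cexp_neg_mul_sq_norm_add (V := V) (b := t) (by simpa) I w
  have hint : ∀ v : V, cexp (⟪w, v⟫ * I) * rexp (-(t * ‖v‖ ^ 2)) =
      cexp (-t * ‖v‖ ^ 2 + I * ⟪w, v⟫) := fun v => by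
    rw [Complex.ofReal_exp, ← Complex.exp_add]
    push_cast
    ring_nf
  simp_rw [hint, h]
  rw [Complex.ofReal_mul, Complex.ofReal_cpow (by positivity), Complex.ofReal_exp]
  push_cast
  rw [Complex.I_sq]
  ring_nf

lemma integrable_norm_charFun_sq_mul_exp (μ : Measure V) [IsFiniteMeasure μ] {t : ℝ} (ht : 0 < t) :
    Integrable fun ξ => ‖charFun μ ξ‖ ^ 2 * rexp (-(t * ‖ξ‖ ^ 2)) := by
  refine ((integrable_exp_neg_mul_sq_norm ht).const_mul (μ.real univ ^ 2)).mono' (by fun_prop)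
    (.of_forall fun ξ => ?_)
  rw [norm_of_nonneg (by positivity)]
  gcongr
  exact norm_charFun_le ξ

end Gaussian

section HeatKernel

variable {m : ℕ}

lemma integral_cexp_inner_mul_exp_eq_heatKernel {t : ℝ} (ht : 0 < t)
    (x y : EuclideanSpace ℝ (Fin m)) :
    ∫ ξ, cexp (⟪x - y, ξ⟫ * I) * rexp (-(t * ‖ξ‖ ^ 2)) =
      (((2 * π) ^ m * heatKernel m t x y : ℝ) : ℂ) := by
  rw [integral_cexp_inner_mul_exp_neg_mul_sq_norm ht, finrank_euclideanSpace_fin, heatKernel,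
    ← mul_assoc, neg_div (2 : ℝ), neg_div (4 * t)]
  congr 2
  have h2π : (2 * π) ^ m = ((2 * π) ^ 2) ^ ((m : ℝ) / 2) := by
    rw [← Real.rpow_natCast, ← Real.rpow_natCast, ← Real.rpow_mul (by positivity)]
    ring_nf
  rw [h2π, Real.rpow_neg (by positivity), ← div_eq_mul_inv,
    ← Real.div_rpow (by positivity) (by positivity)]
  congr 1
  field_simp
  ring

variable (μ : Measure (EuclideanSpace ℝ (Fin m))) [IsFiniteMeasure μ]

theorem integral_integral_heatKernel {t : ℝ} (ht : 0 < t) :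
    ∫ x, ∫ y, heatKernel m t x y ∂μ ∂μ =
      ((2 * π) ^ m)⁻¹ * ∫ ξ, ‖charFun μ ξ‖ ^ 2 * rexp (-(t * ‖ξ‖ ^ 2)) := by
  rw [eq_inv_mul_iff_mul_eq₀ (by positivity)]
  apply Complex.ofReal_injective
  rw [← integral_complex_ofReal,
    ← integral_integral_integral_cexp_inner_mul_conj μ (integrable_exp_neg_mul_sq_norm ht)]
  simp_rw [← integral_const_mul, ← integral_complex_ofReal,
    ← integral_cexp_inner_mul_exp_eq_heatKernel ht, cexp_inner_sub_mul_I]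

end HeatKernel

theorem stmt_4_general (m : ℕ) (Ω : Set (EuclideanSpace ℝ (Fin m)))
    (hvol : volume Ω < ⊤) :
    ConvexOn ℝ (Set.Ioi 0) (heatContent m Ω) := by
  have : IsFiniteMeasure (volume.restrict Ω) := isFiniteMeasure_restrict.2 hvol.ne
  refine ConvexOn.congr ?_ fun t ht => (integral_integral_heatKernel (volume.restrict Ω) ht).symm
  refine ConvexOn.smul (by positivity) <| convexOn_integral (convex_Ioi 0) (fun ξ => ?_)
    fun t ht => integrable_norm_charFun_sq_mul_exp _ ht
  exact ((convexOn_exp_neg_mul _).subset (subset_univ _) (convex_Ioi 0)).smul (sq_nonneg _)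

theorem stmt_4 (m : ℕ) (hm : 1 ≤ m) (Ω : Set (EuclideanSpace ℝ (Fin m)))
    (hne : Ω.Nonempty) (hopen : IsOpen Ω) (hvol : volume Ω < ⊤) :
    ConvexOn ℝ (Set.Ioi 0) (heatContent m Ω) :=
  stmt_4_general m Ω hvol
end

section
/- Let Ω ⊆ ℝ^m be a nonempty open set with diam(Ω) < ∞. Then for all t ≥ (diam(Ω))², the heat content satisfies (d/dt) H_Ω(t) ≤ -((2m-1)/4)·H_Ω(t)/t. -/
open MeasureTheory Real Set Filter

/-! The time derivative of the heat kernel is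
`∂ₜ p_t(x, y) = p_t(x, y) (‖x - y‖² / (4t²) - m / (2t))`, and for `x, y ∈ Ω` and `t ≥ diam(Ω)²`
the bracket is at most `-(2m - 1) / (4t)`. Since `Ω` is bounded, `∂ₜ p` is dominated near `t` on
`Ω × Ω`, so `H_Ω` may be differentiated under the integral and the pointwise bound integrates to
the claim. Here `t > 0` because a nonempty open subset of `ℝ^m`, `m ≥ 1`, has positive diameter. -/

theorem norm_sub_le_diam {α : Type*} [SeminormedAddCommGroup α] {s : Set α}
    (hs : Bornology.IsBounded s) {x y : α} (hx : x ∈ s) (hy : y ∈ s) :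
    ‖x - y‖ ≤ Metric.diam s :=
  dist_eq_norm x y ▸ Metric.dist_le_diam_of_mem hs hx hy

section

variable {m : ℕ}

local notation "E" => EuclideanSpace ℝ (Fin m)

theorem continuous_heatKernel (t : ℝ) : Continuous (fun z : E × E => heatKernel m t z.1 z.2) := by
  unfold heatKernel; fun_prop

theorem heatKernel_nonneg {t : ℝ} (ht : 0 < t) (x y : E) : 0 ≤ heatKernel m t x y := by
  unfold heatKernel; positivity

theorem heatKernel_le {t : ℝ} (ht : 0 < t) (x y : E) :
    heatKernel m t x y ≤ (4 * π * t) ^ (-(m : ℝ) / 2) := by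
  have hexp : Real.exp (-‖x - y‖ ^ 2 / (4 * t)) ≤ 1 :=
    Real.exp_le_one_iff.2 (div_nonpos_of_nonpos_of_nonneg (neg_nonpos.2 (by positivity))
      (by positivity))
  exact mul_le_of_le_one_right (by positivity) hexp

theorem integrableOn_heatKernel {S : Set (E × E)} (hS : volume S ≠ ⊤) {t : ℝ} (ht : 0 < t) :
    IntegrableOn (fun z : E × E => heatKernel m t z.1 z.2) S := by
  refine Integrable.mono' (integrableOn_const (C := (4 * π * t) ^ (-(m : ℝ) / 2)) hS)
    (continuous_heatKernel t).aestronglyMeasurable (ae_of_all _ fun z => ?_)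
  rw [Real.norm_of_nonneg (heatKernel_nonneg ht _ _)]
  exact heatKernel_le ht _ _

theorem heatContent_eq_setIntegral_prod {Ω : Set E} (hbd : Bornology.IsBounded Ω) {t : ℝ}
    (ht : 0 < t) : heatContent m Ω t = ∫ z in Ω ×ˢ Ω, heatKernel m t z.1 z.2 := by
  rw [heatContent, Measure.volume_eq_prod, ← Measure.prod_restrict, integral_integral]
  rw [Measure.prod_restrict, ← Measure.volume_eq_prod]
  exact integrableOn_heatKernel (hbd.prod hbd).measure_lt_top.ne ht

theorem hasDerivAt_heatKernel (x y : E) {t : ℝ} (ht : 0 < t) :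
    HasDerivAt (fun s => heatKernel m s x y)
      (heatKernel m t x y * (-(m : ℝ) / 2 / t + ‖x - y‖ ^ 2 / (4 * t ^ 2))) t := by
  have h4πt : 0 < 4 * π * t := by positivity
  have hpow : HasDerivAt (fun s : ℝ => (4 * π * s) ^ (-(m : ℝ) / 2))
      ((-(m : ℝ) / 2) * (4 * π * t) ^ (-(m : ℝ) / 2 - 1) * (4 * π)) t :=
    ((hasDerivAt_id t).const_mul (4 * π)).rpow_const (Or.inl (by simpa using h4πt.ne'))
      |>.congr_deriv (by simp only [id]; ring)
  have hexp : HasDerivAt (fun s : ℝ => -‖x - y‖ ^ 2 / (4 * s)) (‖x - y‖ ^ 2 / (4 * t ^ 2)) t := by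
    have hfun : (fun s : ℝ => -‖x - y‖ ^ 2 / (4 * s)) = fun s => -‖x - y‖ ^ 2 / 4 * s⁻¹ := by
      ext s; ring
    rw [hfun]
    exact ((hasDerivAt_inv ht.ne').const_mul _).congr_deriv (by field_simp)
  refine (hpow.mul hexp.exp).congr_deriv ?_
  rw [heatKernel, Real.rpow_sub_one h4πt.ne']
  field_simp

theorem abs_heatKernel_mul_rate_le {t s D : ℝ} (ht : 0 < t) (hs : t / 2 < s) {x y : E}
    (hxy : ‖x - y‖ ≤ D) :
    |heatKernel m s x y * (-(m : ℝ) / 2 / s + ‖x - y‖ ^ 2 / (4 * s ^ 2))| ≤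
      (2 * π * t) ^ (-(m : ℝ) / 2) * (m / t + D ^ 2 / t ^ 2) := by
  have hs0 : 0 < s := by linarith
  have hkernel : heatKernel m s x y ≤ (2 * π * t) ^ (-(m : ℝ) / 2) :=
    (heatKernel_le hs0 x y).trans <| Real.rpow_le_rpow_of_nonpos (by positivity)
      (by nlinarith [Real.pi_pos])
      (div_nonpos_of_nonpos_of_nonneg (neg_nonpos.2 m.cast_nonneg) zero_le_two)
  have hrate : |-(m : ℝ) / 2 / s + ‖x - y‖ ^ 2 / (4 * s ^ 2)| ≤ m / t + D ^ 2 / t ^ 2 := by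
    have hm : (m : ℝ) / 2 / s ≤ m / t := by
      rw [div_div]; exact div_le_div_of_nonneg_left m.cast_nonneg ht (by linarith)
    have hr : ‖x - y‖ ^ 2 / (4 * s ^ 2) ≤ D ^ 2 / t ^ 2 :=
      div_le_div₀ (by positivity) (pow_le_pow_left₀ (norm_nonneg _) hxy 2) (by positivity)
        (by nlinarith)
    have : 0 ≤ ‖x - y‖ ^ 2 / (4 * s ^ 2) := by positivity
    have : 0 ≤ (m : ℝ) / 2 / s := by positivity
    rw [neg_div, neg_div, abs_le]
    constructor <;> linarith
  rw [abs_mul, abs_of_nonneg (heatKernel_nonneg hs0 x y)]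
  exact mul_le_mul hkernel hrate (abs_nonneg _) (by positivity)

theorem integrableOn_heatKernel_mul_rate {Ω : Set E} (hΩ : MeasurableSet Ω)
    (hbd : Bornology.IsBounded Ω) {t : ℝ} (ht : 0 < t) :
    IntegrableOn (fun z : E × E => heatKernel m t z.1 z.2 *
      (-(m : ℝ) / 2 / t + ‖z.1 - z.2‖ ^ 2 / (4 * t ^ 2))) (Ω ×ˢ Ω) := by
  refine Integrable.mono'
    (integrableOn_const (C := (2 * π * t) ^ (-(m : ℝ) / 2) * (m / t + Metric.diam Ω ^ 2 / t ^ 2))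
      (hbd.prod hbd).measure_lt_top.ne)
    ((continuous_heatKernel t).mul (by fun_prop)).aestronglyMeasurable ?_
  filter_upwards [ae_restrict_mem (hΩ.prod hΩ)] with z hz
  exact abs_heatKernel_mul_rate_le ht (half_lt_self ht) (norm_sub_le_diam hbd hz.1 hz.2)

theorem hasDerivAt_heatContent {Ω : Set E} (hΩ : MeasurableSet Ω) (hbd : Bornology.IsBounded Ω)
    {t : ℝ} (ht : 0 < t) :
    HasDerivAt (heatContent m Ω)
      (∫ z in Ω ×ˢ Ω, heatKernel m t z.1 z.2 *
        (-(m : ℝ) / 2 / t + ‖z.1 - z.2‖ ^ 2 / (4 * t ^ 2))) t := by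
  have hfin : volume (Ω ×ˢ Ω) ≠ ⊤ := (hbd.prod hbd).measure_lt_top.ne
  have hball : ∀ s ∈ Metric.ball t (t / 2), t / 2 < s := fun s hs => by
    rw [Metric.mem_ball, Real.dist_eq, abs_sub_lt_iff] at hs; linarith
  obtain ⟨-, hderiv⟩ := hasDerivAt_integral_of_dominated_loc_of_deriv_le
    (μ := volume.restrict (Ω ×ˢ Ω)) (Metric.ball_mem_nhds t (half_pos ht))
    (Eventually.of_forall fun s => (continuous_heatKernel s).aestronglyMeasurable.restrict)
    (integrableOn_heatKernel hfin ht)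
    (((continuous_heatKernel t).mul (by fun_prop)).aestronglyMeasurable.restrict)
    (bound := fun _ => (2 * π * t) ^ (-(m : ℝ) / 2) * (m / t + Metric.diam Ω ^ 2 / t ^ 2))
    (by
      filter_upwards [ae_restrict_mem (hΩ.prod hΩ)] with z hz s hs
      exact abs_heatKernel_mul_rate_le ht (hball s hs) (norm_sub_le_diam hbd hz.1 hz.2))
    (integrableOn_const hfin)
    (ae_of_all _ fun z s hs => hasDerivAt_heatKernel z.1 z.2 ((half_pos ht).trans (hball s hs)))
  refine hderiv.congr_of_eventuallyEq ?_
  filter_upwards [eventually_gt_nhds ht] with s hs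
  exact heatContent_eq_setIntegral_prod hbd hs

theorem heatKernel_mul_rate_le {t : ℝ} (ht : 0 < t) {x y : E} (hxy : ‖x - y‖ ^ 2 ≤ t) :
    heatKernel m t x y * (-(m : ℝ) / 2 / t + ‖x - y‖ ^ 2 / (4 * t ^ 2)) ≤
      -((2 * (m : ℝ) - 1) / 4) / t * heatKernel m t x y := by
  have hrate : -(m : ℝ) / 2 / t + ‖x - y‖ ^ 2 / (4 * t ^ 2) ≤ -((2 * (m : ℝ) - 1) / 4) / t := by
    have : ‖x - y‖ ^ 2 / (4 * t ^ 2) ≤ t / (4 * t ^ 2) := by gcongr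
    calc _ ≤ -(m : ℝ) / 2 / t + t / (4 * t ^ 2) := by linarith
      _ = _ := by field_simp; ring
  rw [mul_comm]
  exact mul_le_mul_of_nonneg_right hrate (heatKernel_nonneg ht x y)

end

theorem stmt_5 (m : ℕ) (hm : 1 ≤ m) (Ω : Set (EuclideanSpace ℝ (Fin m)))
    (hne : Ω.Nonempty) (hopen : IsOpen Ω) (hbd : Bornology.IsBounded Ω)
    (t : ℝ) (ht : (Metric.diam Ω) ^ 2 ≤ t) :
    deriv (heatContent m Ω) t ≤
      -((2 * (m : ℝ) - 1) / 4) * heatContent m Ω t / t := by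
  obtain ⟨x, hx⟩ := hne
  have : Nonempty (Fin m) := ⟨⟨0, hm⟩⟩
  have hdiam : 0 < Metric.diam Ω :=
    Metric.diam_pos (infinite_of_mem_nhds x (hopen.mem_nhds hx)).nontrivial hbd
  have ht0 : 0 < t := (pow_pos hdiam 2).trans_le ht
  rw [(hasDerivAt_heatContent hopen.measurableSet hbd ht0).deriv,
    heatContent_eq_setIntegral_prod hbd ht0, mul_div_right_comm, ← integral_const_mul]
  refine integral_mono_ae (integrableOn_heatKernel_mul_rate hopen.measurableSet hbd ht0)
    ((integrableOn_heatKernel (hbd.prod hbd).measure_lt_top.ne ht0).const_mul _) ?_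
  filter_upwards [ae_restrict_mem (hopen.measurableSet.prod hopen.measurableSet)] with z hz
  exact heatKernel_mul_rate_le ht0
    ((pow_le_pow_left₀ (norm_nonneg _) (norm_sub_le_diam hbd hz.1 hz.2) 2).trans ht)
end

section
/- For a nonempty open bounded set Ω ⊆ ℝ^m, the third derivative of the heat content satisfies H_Ω'''(t) ≤ 0 for all t > 0; equivalently, H_Ω'' is decreasing on (0, ∞). -/
open MeasureTheory Real Set Filter

/-!
By Plancherel, the heat content is a Laplace transform in `|ξ|²`: the heat kernel is the Fourier
transform of the Gaussian `(2π)^{-m} e^{-t|ξ|²}`, and Fubini turns the integral over `Ω × Ω` into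
`H_Ω(t) = ∫ (2π)^{-m} |χ̂_Ω(ξ)|² e^{-t|ξ|²} dξ`, where `χ̂_Ω = charFun (volume.restrict Ω)`.
Differentiating under the integral,
`H_Ω⁽ⁿ⁾(t) = (-1)ⁿ ∫ (2π)^{-m} |χ̂_Ω(ξ)|² |ξ|^{2n} e^{-t|ξ|²} dξ`,
so the third derivative is minus a nonnegative integral and the second is a decreasing one.
-/

open scoped Nat

namespace HeatContent

section LaplaceMoment

variable {α : Type*} [MeasurableSpace α] {μ : Measure α} {w ℓ : α → ℝ} {t : ℝ}

noncomputable def laplaceMoment (μ : Measure α) (w ℓ : α → ℝ) (k : ℕ) (t : ℝ) : ℝ :=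
  ∫ a, w a * ℓ a ^ k * rexp (-t * ℓ a) ∂μ

lemma pow_mul_exp_neg_mul_le {x s : ℝ} (hx : 0 ≤ x) (hs : 0 < s) (k : ℕ) :
    x ^ k * rexp (-s * x) ≤ k ! / s ^ k := by
  have h := Real.pow_div_factorial_le_exp (s * x) (by positivity) k
  rw [div_le_iff₀ (by positivity)] at h
  rw [le_div_iff₀ (by positivity), neg_mul, Real.exp_neg]
  calc x ^ k * (rexp (s * x))⁻¹ * s ^ k = (s * x) ^ k * (rexp (s * x))⁻¹ := by ring
    _ ≤ rexp (s * x) * k ! * (rexp (s * x))⁻¹ := by gcongr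
    _ = k ! := by field_simp

lemma laplaceMoment_nonneg (hw : ∀ a, 0 ≤ w a) (hℓ : ∀ a, 0 ≤ ℓ a) (k : ℕ) (t : ℝ) :
    0 ≤ laplaceMoment μ w ℓ k t :=
  integral_nonneg fun a => by have := hw a; have := hℓ a; positivity

lemma integrable_laplaceMoment_integrand (hℓ : ∀ a, 0 ≤ ℓ a) (hℓm : AEStronglyMeasurable ℓ μ)
    (hint : ∀ t > 0, Integrable (fun a => w a * rexp (-t * ℓ a)) μ) (k : ℕ) (ht : 0 < t) :
    Integrable (fun a => w a * ℓ a ^ k * rexp (-t * ℓ a)) μ := by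
  -- `ℓ ^ k e^{-tℓ/2}` is bounded, and `w e^{-tℓ/2}` is integrable.
  have hbdd : ∀ a, ‖ℓ a ^ k * rexp (-(t / 2) * ℓ a)‖ ≤ k ! / (t / 2) ^ k := fun a => by
    rw [Real.norm_of_nonneg (by have := hℓ a; positivity)]
    exact pow_mul_exp_neg_mul_le (hℓ a) (half_pos ht) k
  refine ((hint (t / 2) (half_pos ht)).mul_bdd (by fun_prop) (ae_of_all _ hbdd)).congr
    (ae_of_all _ fun a => ?_)
  dsimp only
  rw [mul_mul_mul_comm, ← Real.exp_add]
  congr 2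
  ring

lemma hasDerivAt_laplaceMoment (hℓ : ∀ a, 0 ≤ ℓ a) (hℓm : AEStronglyMeasurable ℓ μ)
    (hint : ∀ t > 0, Integrable (fun a => w a * rexp (-t * ℓ a)) μ) (k : ℕ) (ht : 0 < t) :
    HasDerivAt (laplaceMoment μ w ℓ k) (-laplaceMoment μ w ℓ (k + 1) t) t := by
  have hderiv : ∀ a s, HasDerivAt (fun s => w a * ℓ a ^ k * rexp (-s * ℓ a))
      (-(w a * ℓ a ^ (k + 1) * rexp (-s * ℓ a))) s := fun a s => by
    refine (((hasDerivAt_neg s).mul_const (ℓ a)).exp.const_mul (w a * ℓ a ^ k)).congr_deriv ?_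
    ring
  -- For `s > t / 2` the derivative is dominated by the `(k + 1)`-st integrand at `t / 2`.
  have hbound : ∀ a, ∀ s ∈ Ioi (t / 2), ‖-(w a * ℓ a ^ (k + 1) * rexp (-s * ℓ a))‖ ≤
      ‖w a * ℓ a ^ (k + 1) * rexp (-(t / 2) * ℓ a)‖ := fun a s hs => by
    rw [norm_neg, norm_mul, norm_mul (w a * _), Real.norm_of_nonneg (Real.exp_pos _).le,
      Real.norm_of_nonneg (Real.exp_pos _).le]
    gcongr
    · exact hℓ a
    · exact le_of_lt hs
  have hmeas : ∀ᶠ s in nhds t, AEStronglyMeasurable (fun a => w a * ℓ a ^ k * rexp (-s * ℓ a)) μ :=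
    eventually_of_mem (Ioi_mem_nhds ht) fun s hs =>
      (integrable_laplaceMoment_integrand hℓ hℓm hint k hs).1
  have h := hasDerivAt_integral_of_dominated_loc_of_deriv_le (Ioi_mem_nhds (half_lt_self ht)) hmeas
    (integrable_laplaceMoment_integrand hℓ hℓm hint k ht)
    (integrable_laplaceMoment_integrand hℓ hℓm hint (k + 1) ht).neg.1 (ae_of_all _ hbound)
    (integrable_laplaceMoment_integrand hℓ hℓm hint (k + 1) (half_pos ht)).norm
    (ae_of_all _ fun a s _ => hderiv a s)
  rw [integral_neg] at h
  exact h.2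

lemma antitoneOn_laplaceMoment (hw : ∀ a, 0 ≤ w a) (hℓ : ∀ a, 0 ≤ ℓ a)
    (hℓm : AEStronglyMeasurable ℓ μ) (hint : ∀ t > 0, Integrable (fun a => w a * rexp (-t * ℓ a)) μ)
    (k : ℕ) : AntitoneOn (laplaceMoment μ w ℓ k) (Ioi 0) := by
  have hD := fun t (ht : t ∈ Ioi (0 : ℝ)) => hasDerivAt_laplaceMoment hℓ hℓm hint k ht
  refine antitoneOn_of_hasDerivWithinAt_nonpos (f' := fun t => -laplaceMoment μ w ℓ (k + 1) t)
    (convex_Ioi 0)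
    (fun t ht => (hD t ht).continuousAt.continuousWithinAt) (fun t ht => ?_) (fun t _ => ?_)
  · rw [interior_Ioi] at ht ⊢
    exact (hD t ht).hasDerivWithinAt
  · exact neg_nonpos.2 (laplaceMoment_nonneg hw hℓ _ _)

lemma iteratedDeriv_eqOn_laplaceMoment {f : ℝ → ℝ} (hf : EqOn f (laplaceMoment μ w ℓ 0) (Ioi 0))
    (hℓ : ∀ a, 0 ≤ ℓ a) (hℓm : AEStronglyMeasurable ℓ μ)
    (hint : ∀ t > 0, Integrable (fun a => w a * rexp (-t * ℓ a)) μ) (n : ℕ) :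
    EqOn (iteratedDeriv n f) (fun t => (-1) ^ n * laplaceMoment μ w ℓ n t) (Ioi 0) := by
  induction n with
  | zero => simpa using hf
  | succ n ih =>
    intro t ht
    have hloc : iteratedDeriv n f =ᶠ[nhds t] fun s => (-1) ^ n * laplaceMoment μ w ℓ n s :=
      eventually_of_mem (Ioi_mem_nhds ht) ih
    rw [iteratedDeriv_succ, hloc.deriv_eq,
      ((hasDerivAt_laplaceMoment hℓ hℓm hint n ht).const_mul _).deriv]
    ring

end LaplaceMoment

section Fourier

open Complex RealInnerProductSpace

variable {V : Type*} [NormedAddCommGroup V] [InnerProductSpace ℝ V] [MeasurableSpace V]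
  [BorelSpace V]

lemma integrable_rexp_neg_mul_sq_norm [FiniteDimensional ℝ V] {b : ℝ} (hb : 0 < b) :
    Integrable (fun v : V => rexp (-b * ‖v‖ ^ 2)) := by
  refine (GaussianFourier.integrable_cexp_neg_mul_sq_norm_add (V := V) (b := b) (by simpa) 0 0
    ).norm.congr (ae_of_all _ fun v => ?_)
  simp only [zero_mul, add_zero, norm_exp]
  norm_cast

lemma integral_integral_integral_cexp_inner_sub_mul [SecondCountableTopology V] (ρ : Measure V)
    [IsFiniteMeasure ρ] {ν : Measure V} [SFinite ν] {g : V → ℂ} (hg : Integrable g ν) :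
    ∫ x, ∫ y, ∫ ξ, cexp (⟪x - y, ξ⟫ * I) * g ξ ∂ν ∂ρ ∂ρ = ∫ ξ, ‖charFun ρ ξ‖ ^ 2 * g ξ ∂ν := by
  set F : V × V → V → ℂ := fun p ξ => cexp (⟪p.1 - p.2, ξ⟫ * I) * g ξ
  have hF : Integrable (Function.uncurry F) ((ρ.prod ρ).prod ν) := by
    refine ((integrable_const (1 : ℝ)).mul_prod hg.norm).mono' ?_ (ae_of_all _ fun q => ?_)
    · exact (Continuous.aestronglyMeasurable (by fun_prop)).mul hg.1.comp_snd
    · simp [F, Function.uncurry, norm_exp_ofReal_mul_I]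
  have hsplit : ∀ ξ, ∫ p, F p ξ ∂(ρ.prod ρ) = ‖charFun ρ ξ‖ ^ 2 * g ξ := fun ξ => by
    have hF_mul : ∀ p : V × V, F p ξ = cexp (⟪p.1, ξ⟫ * I) * (cexp (⟪p.2, -ξ⟫ * I) * g ξ) :=
      fun p => by
        simp only [F, inner_sub_left, inner_neg_right, ← mul_assoc, ← Complex.exp_add]
        push_cast
        ring_nf
    simp_rw [hF_mul]
    rw [integral_prod_mul (fun x : V => cexp (⟪x, ξ⟫ * I)) (fun y : V => cexp (⟪y, -ξ⟫ * I) * g ξ),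
      integral_mul_const, ← charFun_apply, ← charFun_apply, charFun_neg,
      ← mul_assoc, mul_conj']
  calc ∫ x, ∫ y, ∫ ξ, cexp (⟪x - y, ξ⟫ * I) * g ξ ∂ν ∂ρ ∂ρ
      = ∫ p, ∫ ξ, F p ξ ∂ν ∂(ρ.prod ρ) := integral_integral hF.integral_prod_left
    _ = ∫ ξ, ∫ p, F p ξ ∂(ρ.prod ρ) ∂ν := integral_integral_swap hF
    _ = ∫ ξ, ‖charFun ρ ξ‖ ^ 2 * g ξ ∂ν := by simp_rw [hsplit]

end Fourier

section Heat

open Complex RealInnerProductSpace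

variable {m : ℕ} {Ω : Set (EuclideanSpace ℝ (Fin m))} {t : ℝ}

lemma heatKernel_constant_eq (m : ℕ) (ht : 0 < t) :
    (4 * π * t) ^ (-(m : ℝ) / 2) = (2 * π) ^ (-(m : ℝ)) * (π / t) ^ ((m : ℝ) / 2) := by
  rw [show 4 * π * t = (2 * π) ^ (2 : ℝ) * (π / t)⁻¹ by
      rw [Real.rpow_two, inv_div]; field_simp; norm_num,
    Real.mul_rpow (by positivity) (by positivity), ← Real.rpow_mul (by positivity),
    Real.inv_rpow (by positivity), ← Real.rpow_neg (by positivity)]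
  ring_nf

lemma heatKernel_eq_integral (ht : 0 < t) (x y : EuclideanSpace ℝ (Fin m)) :
    (heatKernel m t x y : ℂ) = ∫ ξ, cexp (⟪x - y, ξ⟫ * I) *
      (((2 * π) ^ (-(m : ℝ)) * rexp (-t * ‖ξ‖ ^ 2) : ℝ) : ℂ) := by
  have hgauss := GaussianFourier.integral_cexp_neg_mul_sq_norm_add
    (V := EuclideanSpace ℝ (Fin m)) (b := t) (by simpa) I (x - y)
  rw [finrank_euclideanSpace_fin] at hgauss
  have hintegrand : ∀ ξ : EuclideanSpace ℝ (Fin m), cexp (⟪x - y, ξ⟫ * I) *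
      (((2 * π) ^ (-(m : ℝ)) * rexp (-t * ‖ξ‖ ^ 2) : ℝ) : ℂ) =
      ((2 * π) ^ (-(m : ℝ)) : ℝ) * cexp (-t * ‖ξ‖ ^ 2 + I * ⟪x - y, ξ⟫) := fun ξ => by
    push_cast
    rw [Complex.exp_add, mul_comm I]
    ring
  simp_rw [hintegrand]
  rw [integral_const_mul, hgauss, heatKernel, heatKernel_constant_eq m ht, I_sq,
    ← ofReal_natCast, ← ofReal_ofNat, ← ofReal_div, ← ofReal_div,
    ← ofReal_cpow (by positivity)]
  push_cast
  ring_nf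

noncomputable def heatSpectralDensity (m : ℕ) (Ω : Set (EuclideanSpace ℝ (Fin m)))
    (ξ : EuclideanSpace ℝ (Fin m)) : ℝ :=
  (2 * π) ^ (-(m : ℝ)) * ‖charFun (volume.restrict Ω) ξ‖ ^ 2

lemma heatSpectralDensity_nonneg (ξ : EuclideanSpace ℝ (Fin m)) :
    0 ≤ heatSpectralDensity m Ω ξ := by
  unfold heatSpectralDensity
  positivity

lemma integrable_heatSpectralDensity_mul_exp (ht : 0 < t) :
    Integrable (fun ξ => heatSpectralDensity m Ω ξ * rexp (-t * ‖ξ‖ ^ 2)) := by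
  refine (integrable_rexp_neg_mul_sq_norm ht).bdd_mul
    (c := (2 * π) ^ (-(m : ℝ)) * (volume.restrict Ω).real univ ^ 2)
    (by unfold heatSpectralDensity; fun_prop) (ae_of_all _ fun ξ => ?_)
  rw [heatSpectralDensity, Real.norm_of_nonneg (by positivity)]
  gcongr
  exact norm_charFun_le ξ

lemma heatContent_eq_laplaceMoment (hΩ : volume Ω ≠ ⊤) (ht : 0 < t) :
    heatContent m Ω t = laplaceMoment volume (heatSpectralDensity m Ω) (‖·‖ ^ 2) 0 t := by
  have := isFiniteMeasure_restrict.2 hΩ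
  apply ofReal_injective
  have hgauss := (integrable_rexp_neg_mul_sq_norm (V := EuclideanSpace ℝ (Fin m)) ht).const_mul
    ((2 * π) ^ (-(m : ℝ)))
  calc ((heatContent m Ω t : ℝ) : ℂ) = ∫ x in Ω, ∫ y in Ω, (heatKernel m t x y : ℂ) := by
        rw [heatContent, ← integral_complex_ofReal]
        simp_rw [← integral_complex_ofReal]
    _ = ∫ x in Ω, ∫ y in Ω, ∫ ξ, cexp (⟪x - y, ξ⟫ * I) *
          (((2 * π) ^ (-(m : ℝ)) * rexp (-t * ‖ξ‖ ^ 2) : ℝ) : ℂ) := by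
        simp_rw [heatKernel_eq_integral ht]
    _ = ∫ ξ, ‖charFun (volume.restrict Ω) ξ‖ ^ 2 *
          (((2 * π) ^ (-(m : ℝ)) * rexp (-t * ‖ξ‖ ^ 2) : ℝ) : ℂ) :=
        integral_integral_integral_cexp_inner_sub_mul _ hgauss.ofReal
    _ = _ := by
        rw [laplaceMoment, ← integral_complex_ofReal]
        congr 1 with ξ
        rw [heatSpectralDensity]
        push_cast
        ring

lemma iteratedDeriv_heatContent (hΩ : volume Ω ≠ ⊤) (n : ℕ) :
    EqOn (iteratedDeriv n (heatContent m Ω))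
      (fun t => (-1) ^ n * laplaceMoment volume (heatSpectralDensity m Ω) (‖·‖ ^ 2) n t)
      (Ioi 0) :=
  iteratedDeriv_eqOn_laplaceMoment (fun _ ht => heatContent_eq_laplaceMoment hΩ ht)
    (fun ξ => sq_nonneg ‖ξ‖) (by fun_prop) (fun _ ht => integrable_heatSpectralDensity_mul_exp ht) n

lemma antitoneOn_laplaceMoment_heatSpectralDensity (m : ℕ) (Ω : Set (EuclideanSpace ℝ (Fin m)))
    (k : ℕ) :
    AntitoneOn (laplaceMoment volume (heatSpectralDensity m Ω) (‖·‖ ^ 2) k) (Ioi 0) :=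
  antitoneOn_laplaceMoment heatSpectralDensity_nonneg (fun ξ => sq_nonneg ‖ξ‖) (by fun_prop)
    (fun _ ht => integrable_heatSpectralDensity_mul_exp ht) k

end Heat

end HeatContent

theorem stmt_13_general (m : ℕ) (Ω : Set (EuclideanSpace ℝ (Fin m))) (hbd : Bornology.IsBounded Ω) :
    (∀ t : ℝ, 0 < t → iteratedDeriv 3 (heatContent m Ω) t ≤ 0) ∧
      AntitoneOn (iteratedDeriv 2 (heatContent m Ω)) (Set.Ioi 0) := by
  open HeatContent in
  have hΩ : volume Ω ≠ ⊤ := hbd.measure_lt_top.ne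
  refine ⟨fun t ht => ?_,
    (antitoneOn_laplaceMoment_heatSpectralDensity m Ω 2).congr fun t ht => ?_⟩
  · rw [iteratedDeriv_heatContent hΩ 3 ht]
    have := laplaceMoment_nonneg (μ := volume) (w := heatSpectralDensity m Ω)
      heatSpectralDensity_nonneg (fun ξ => sq_nonneg ‖ξ‖) 3 t
    linarith
  · rw [iteratedDeriv_heatContent hΩ 2 ht]
    ring

theorem stmt_13 (m : ℕ) (hm : 1 ≤ m) (Ω : Set (EuclideanSpace ℝ (Fin m)))
    (hne : Ω.Nonempty) (hopen : IsOpen Ω) (hbd : Bornology.IsBounded Ω) :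
    (∀ t : ℝ, 0 < t → iteratedDeriv 3 (heatContent m Ω) t ≤ 0) ∧
      AntitoneOn (iteratedDeriv 2 (heatContent m Ω)) (Set.Ioi 0) :=
  stmt_13_general m Ω hbd
end
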